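/- arXiv:1410.5496 — 2 statements merged into one kernel-verified Lean document; each statement's English description precedes it below -/
import Mathlib

section
/- (Lemma 1) Let V : [0,1] → ℝ be convex and bounded, and suppose that for every b ∈ [0,1] the function x ↦ V(Γ_x(b)) W_b(x) is μ-integrable. Then the function f(b) = λ b − (λ − c) + β ∫_X V(Γ_x(b)) W_b(x) dμ(x) − β V(1−p) is convex on [0,1]. -/
/-!
Write `u(b) = (1 - p) Q1(x) b`, so that `Γ_x(b) = u(b) / W_b(x)`. For fixed `x` both `u` and
`b ↦ W_b(x)` are affine with `0 ≤ u ≤ W`, and `b ↦ V(Γ_x(b)) W_b(x)` is the perspective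
`(u, w) ↦ w V(u / w)` of the convex function `V` evaluated along an affine path, hence convex.
Integrating in `x` preserves convexity, and `f` adds to `β` times this integral only an affine
function of `b`.
-/

open MeasureTheory

/-- Unnormalized observation probability `W_b(x) = Q1(x) b + Q0(x)(1-b)`. -/
noncomputable def Wf {X : Type*} (Q0 Q1 : X → ℝ) (b : ℝ) (x : X) : ℝ :=
  Q1 x * b + Q0 x * (1 - b)

/-- Do-nothing belief update `Γ_x(b) = (1-p) Q1(x) b / W_b(x)`; since in `ℝ`
division by zero yields `0`, this automatically satisfies the convention
`Γ_x(b) = 0` when `W_b(x) = 0`. -/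
noncomputable def Gf {X : Type*} (p : ℝ) (Q0 Q1 : X → ℝ) (x : X) (b : ℝ) : ℝ :=
  (1 - p) * Q1 x * b / Wf Q0 Q1 b x

section Perspective

variable {E : Type*} [AddCommGroup E] [Module ℝ E] {s : Set E} {V : E → ℝ}

/-- Subadditivity of the perspective `(z, w) ↦ w V(w⁻¹ • z)` of `V`, evaluated at the points
`(w₁ • x, w₁)` and `(w₂ • y, w₂)`. -/
theorem ConvexOn.perspective_le (hV : ConvexOn ℝ s V) {x y : E} (hx : x ∈ s) (hy : y ∈ s)
    {w₁ w₂ : ℝ} (hw₁ : 0 ≤ w₁) (hw₂ : 0 ≤ w₂) :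
    V ((w₁ + w₂)⁻¹ • (w₁ • x + w₂ • y)) * (w₁ + w₂) ≤ w₁ * V x + w₂ * V y := by
  rcases (add_nonneg hw₁ hw₂).eq_or_lt with hsum | hsum
  · obtain ⟨rfl, rfl⟩ : w₁ = 0 ∧ w₂ = 0 := by constructor <;> linarith
    simp
  have hcomb := hV.2 hx hy (div_nonneg hw₁ hsum.le) (div_nonneg hw₂ hsum.le)
    (by rw [← add_div, div_self hsum.ne'])
  rw [smul_eq_mul, smul_eq_mul, div_eq_inv_mul, div_eq_inv_mul, mul_smul, mul_smul,
    ← smul_add] at hcomb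
  calc V ((w₁ + w₂)⁻¹ • (w₁ • x + w₂ • y)) * (w₁ + w₂)
      ≤ ((w₁ + w₂)⁻¹ * w₁ * V x + (w₁ + w₂)⁻¹ * w₂ * V y) * (w₁ + w₂) :=
        mul_le_mul_of_nonneg_right hcomb hsum.le
    _ = w₁ * V x + w₂ * V y := by field_simp

end Perspective

theorem convexOn_integral {E X : Type*} [AddCommGroup E] [Module ℝ E] [MeasurableSpace X]
    {μ : Measure X} {s : Set E} (hs : Convex ℝ s) {F : E → X → ℝ}
    (hF : ∀ᵐ x ∂μ, ConvexOn ℝ s fun b => F b x) (hint : ∀ b ∈ s, Integrable (F b) μ) :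
    ConvexOn ℝ s fun b => ∫ x, F b x ∂μ := by
  refine ⟨hs, fun b₁ hb₁ b₂ hb₂ a₁ a₂ ha₁ ha₂ hsum => ?_⟩
  have hint₁ := (hint b₁ hb₁).const_mul a₁
  have hint₂ := (hint b₂ hb₂).const_mul a₂
  calc ∫ x, F (a₁ • b₁ + a₂ • b₂) x ∂μ
      ≤ ∫ x, (a₁ * F b₁ x + a₂ * F b₂ x) ∂μ :=
        integral_mono_ae (hint _ (hs hb₁ hb₂ ha₁ ha₂ hsum)) (hint₁.add hint₂)
          (hF.mono fun x hx => hx.2 hb₁ hb₂ ha₁ ha₂ hsum)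
    _ = a₁ • ∫ x, F b₁ x ∂μ + a₂ • ∫ x, F b₂ x ∂μ := by
        rw [integral_add hint₁ hint₂, integral_const_mul, integral_const_mul, smul_eq_mul,
          smul_eq_mul]

section Belief

variable {X : Type*} {p : ℝ} {Q0 Q1 : X → ℝ} {x : X} {b : ℝ}

theorem Wf_nonneg (hQ0 : 0 ≤ Q0 x) (hQ1 : 0 ≤ Q1 x) (hb : b ∈ Set.Icc (0 : ℝ) 1) :
    0 ≤ Wf Q0 Q1 b x :=
  add_nonneg (mul_nonneg hQ1 hb.1) (mul_nonneg hQ0 (sub_nonneg.2 hb.2))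

theorem Wf_add (b₁ b₂ : ℝ) {a₁ a₂ : ℝ} (hsum : a₁ + a₂ = 1) :
    Wf Q0 Q1 (a₁ * b₁ + a₂ * b₂) x = a₁ * Wf Q0 Q1 b₁ x + a₂ * Wf Q0 Q1 b₂ x := by
  obtain rfl : a₂ = 1 - a₁ := by linarith
  unfold Wf
  ring

theorem Gf_numerator_nonneg (hp : p ∈ Set.Icc (0 : ℝ) 1) (hQ1 : 0 ≤ Q1 x)
    (hb : b ∈ Set.Icc (0 : ℝ) 1) : 0 ≤ (1 - p) * Q1 x * b :=
  mul_nonneg (mul_nonneg (sub_nonneg.2 hp.2) hQ1) hb.1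

theorem Gf_numerator_le_Wf (hp : p ∈ Set.Icc (0 : ℝ) 1) (hQ0 : 0 ≤ Q0 x) (hQ1 : 0 ≤ Q1 x)
    (hb : b ∈ Set.Icc (0 : ℝ) 1) : (1 - p) * Q1 x * b ≤ Wf Q0 Q1 b x := by
  have hQ1b : 0 ≤ Q1 x * b := mul_nonneg hQ1 hb.1
  have hQ0b : 0 ≤ Q0 x * (1 - b) := mul_nonneg hQ0 (sub_nonneg.2 hb.2)
  unfold Wf
  nlinarith [hp.1]

theorem Gf_mem_Icc (hp : p ∈ Set.Icc (0 : ℝ) 1) (hQ0 : 0 ≤ Q0 x) (hQ1 : 0 ≤ Q1 x)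
    (hb : b ∈ Set.Icc (0 : ℝ) 1) : Gf p Q0 Q1 x b ∈ Set.Icc (0 : ℝ) 1 :=
  ⟨div_nonneg (Gf_numerator_nonneg hp hQ1 hb) (Wf_nonneg hQ0 hQ1 hb),
    div_le_one_of_le₀ (Gf_numerator_le_Wf hp hQ0 hQ1 hb) (Wf_nonneg hQ0 hQ1 hb)⟩

/-- Also true when `W_b(x) = 0`, because the numerator of `Γ_x(b)` vanishes with it. -/
theorem Wf_mul_Gf (hp : p ∈ Set.Icc (0 : ℝ) 1) (hQ0 : 0 ≤ Q0 x) (hQ1 : 0 ≤ Q1 x)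
    (hb : b ∈ Set.Icc (0 : ℝ) 1) : Wf Q0 Q1 b x * Gf p Q0 Q1 x b = (1 - p) * Q1 x * b := by
  rcases (Wf_nonneg hQ0 hQ1 hb).eq_or_lt with hW | hW
  · rw [← hW, zero_mul]
    linarith [Gf_numerator_le_Wf hp hQ0 hQ1 hb, Gf_numerator_nonneg hp hQ1 hb]
  · exact mul_div_cancel₀ _ hW.ne'

theorem convexOn_comp_Gf_mul_Wf (hp : p ∈ Set.Icc (0 : ℝ) 1) (hQ0 : 0 ≤ Q0 x)
    (hQ1 : 0 ≤ Q1 x) {V : ℝ → ℝ} (hV : ConvexOn ℝ (Set.Icc (0 : ℝ) 1) V) :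
    ConvexOn ℝ (Set.Icc (0 : ℝ) 1) fun b => V (Gf p Q0 Q1 x b) * Wf Q0 Q1 b x := by
  refine ⟨convex_Icc 0 1, fun b₁ hb₁ b₂ hb₂ a₁ a₂ ha₁ ha₂ hsum => ?_⟩
  simp only [smul_eq_mul]
  have hb := convex_Icc (0 : ℝ) 1 hb₁ hb₂ ha₁ ha₂ hsum
  simp only [smul_eq_mul] at hb
  have hGf : Gf p Q0 Q1 x (a₁ * b₁ + a₂ * b₂) =
      (a₁ * Wf Q0 Q1 b₁ x + a₂ * Wf Q0 Q1 b₂ x)⁻¹ *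
        (a₁ * Wf Q0 Q1 b₁ x * Gf p Q0 Q1 x b₁ + a₂ * Wf Q0 Q1 b₂ x * Gf p Q0 Q1 x b₂) := by
    rw [mul_assoc, mul_assoc, Wf_mul_Gf hp hQ0 hQ1 hb₁, Wf_mul_Gf hp hQ0 hQ1 hb₂,
      ← Wf_add b₁ b₂ hsum, Gf, inv_mul_eq_div]
    ring_nf
  have hpersp := hV.perspective_le (Gf_mem_Icc hp hQ0 hQ1 hb₁) (Gf_mem_Icc hp hQ0 hQ1 hb₂)
    (mul_nonneg ha₁ (Wf_nonneg hQ0 hQ1 hb₁)) (mul_nonneg ha₂ (Wf_nonneg hQ0 hQ1 hb₂))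
  simp only [smul_eq_mul] at hpersp
  rw [hGf, Wf_add b₁ b₂ hsum]
  linarith

end Belief

theorem adr_f_convex_general
    {X : Type*} [MeasurableSpace X] (μ : Measure X)
    (p lam c β : ℝ)
    (hp : p ∈ Set.Icc (0 : ℝ) 1)
    (hβ : β ∈ Set.Ioo (0 : ℝ) 1)
    (Q0 Q1 : X → ℝ)
    (hQ0nn : ∀ x, 0 ≤ Q0 x) (hQ1nn : ∀ x, 0 ≤ Q1 x)
    (V : ℝ → ℝ)
    (hVconv : ConvexOn ℝ (Set.Icc (0 : ℝ) 1) V)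
    (hVint : ∀ b ∈ Set.Icc (0 : ℝ) 1,
      Integrable (fun x => V (Gf p Q0 Q1 x b) * Wf Q0 Q1 b x) μ) :
    ConvexOn ℝ (Set.Icc (0 : ℝ) 1)
      (fun b => lam * b - (lam - c) +
        β * ∫ x, V (Gf p Q0 Q1 x b) * Wf Q0 Q1 b x ∂μ - β * V (1 - p)) := by
  have hintegral : ConvexOn ℝ (Set.Icc (0 : ℝ) 1)
      fun b => ∫ x, V (Gf p Q0 Q1 x b) * Wf Q0 Q1 b x ∂μ :=
    convexOn_integral (convex_Icc 0 1)
      (.of_forall fun x => convexOn_comp_Gf_mul_Wf hp (hQ0nn x) (hQ1nn x) hVconv) hVint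
  have haffine : ConvexOn ℝ (Set.Icc (0 : ℝ) 1) fun b => lam * b - (lam - c) :=
    ((LinearMap.mul ℝ ℝ lam).convexOn (convex_Icc 0 1)).add_const (-(lam - c))
  exact (haffine.add (hintegral.smul hβ.1.le)).add_const (-(β * V (1 - p)))

/-- **Lemma 1.** Let `V : [0,1] → ℝ` be convex and bounded, with
`x ↦ V(Γ_x(b)) W_b(x)` μ-integrable for every `b ∈ [0,1]`.  Then
`f(b) = λ b − (λ − c) + β ∫ V(Γ_x(b)) W_b(x) dμ(x) − β V(1−p)`
is convex on `[0,1]`. -/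
theorem adr_f_convex
    {X : Type*} [MeasurableSpace X] (μ : Measure X) [SigmaFinite μ]
    (p lam c β : ℝ)
    (hp : p ∈ Set.Icc (0 : ℝ) 1) (hlam : 0 < lam) (hc : 0 < c)
    (hβ : β ∈ Set.Ioo (0 : ℝ) 1)
    (Q0 Q1 : X → ℝ)
    (hQ0meas : Measurable Q0) (hQ1meas : Measurable Q1)
    (hQ0nn : ∀ x, 0 ≤ Q0 x) (hQ1nn : ∀ x, 0 ≤ Q1 x)
    (hQ0int : ∫ x, Q0 x ∂μ = 1) (hQ1int : ∫ x, Q1 x ∂μ = 1)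
    (V : ℝ → ℝ)
    (hVconv : ConvexOn ℝ (Set.Icc (0 : ℝ) 1) V)
    (hVbdd : ∃ C, ∀ b ∈ Set.Icc (0 : ℝ) 1, |V b| ≤ C)
    (hVint : ∀ b ∈ Set.Icc (0 : ℝ) 1,
      Integrable (fun x => V (Gf p Q0 Q1 x b) * Wf Q0 Q1 b x) μ) :
    ConvexOn ℝ (Set.Icc (0 : ℝ) 1)
      (fun b => lam * b - (lam - c) +
        β * ∫ x, V (Gf p Q0 Q1 x b) * Wf Q0 Q1 b x ∂μ - β * V (1 - p)) :=
  adr_f_convex_general μ p lam c β hp hβ Q0 Q1 hQ0nn hQ1nn V hVconv hVint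
end

section
/- (Theorem 2: indexability of the ADR repair scheduling problem) For each subsidy μ₀ ≥ 0, let V_{μ₀} : [0,1] → ℝ be the bounded convex function satisfying the subsidy-μ₀ Bellman equation V_{μ₀}(b) = max{ λ b + μ₀ + β ∫_X V_{μ₀}(Γ_x(b)) W_b(x) dμ(x), λ − c + β V_{μ₀}(1−p) } for all b ∈ [0,1], and let B₀(μ₀) = { b ∈ [0,1] : λ b + μ₀ + β ∫_X V_{μ₀}(Γ_x(b)) W_b(x) dμ(x) ≥ λ − c + β V_{μ₀}(1−p) } be the set of belief states at which the do-nothing action is optimal. Then the problem is indexable: for all 0 ≤ μ₀ ≤ ζ, B₀(μ₀) ⊆ B₀(ζ); equivalently, the optimal repair threshold b*(μ₀) = sup{ b ∈ [0,1] : b ∉ B₀(μ₀) } (with sup ∅ interpreted as a value below 0) is non-increasing in μ₀. -/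
open MeasureTheory

/-- **Theorem 2: indexability.** For each subsidy `μ₀ ≥ 0`, let
`V_{μ₀}` be the bounded convex function satisfying the subsidy-`μ₀` Bellman
equation
`V_{μ₀}(b) = max{ λ b + μ₀ + β ∫ V_{μ₀}(Γ_x(b)) W_b(x) dμ(x), λ − c + β V_{μ₀}(1−p) }`
on `[0,1]`, and let
`B₀(μ₀) = { b ∈ [0,1] : λ b + μ₀ + β ∫ V_{μ₀}(Γ_x(b)) W_b(x) dμ(x) ≥ λ − c + β V_{μ₀}(1−p) }`
be the states at which doing nothing is optimal.  Then the ADR repair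
scheduling problem is indexable: `B₀(μ₀) ⊆ B₀(ζ)` whenever `0 ≤ μ₀ ≤ ζ`. -/
theorem adr_repair_scheduling_indexable
    {X : Type*} [MeasurableSpace X] (μ : Measure X) [SigmaFinite μ]
    (p lam c β : ℝ)
    (hp : p ∈ Set.Icc (0 : ℝ) 1) (hlam : 0 < lam) (hc : 0 < c)
    (hβ : β ∈ Set.Ioo (0 : ℝ) 1)
    (Q0 Q1 : X → ℝ)
    (hQ0meas : Measurable Q0) (hQ1meas : Measurable Q1)
    (hQ0nn : ∀ x, 0 ≤ Q0 x) (hQ1nn : ∀ x, 0 ≤ Q1 x)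
    (hQ0int : ∫ x, Q0 x ∂μ = 1) (hQ1int : ∫ x, Q1 x ∂μ = 1)
    -- the family of subsidy-μ₀ value functions
    (Vs : ℝ → ℝ → ℝ)
    (hVbdd : ∀ μ₀ : ℝ, 0 ≤ μ₀ → ∃ C, ∀ b ∈ Set.Icc (0 : ℝ) 1, |Vs μ₀ b| ≤ C)
    (hVconv : ∀ μ₀ : ℝ, 0 ≤ μ₀ → ConvexOn ℝ (Set.Icc (0 : ℝ) 1) (Vs μ₀))
    (hVint : ∀ μ₀ : ℝ, 0 ≤ μ₀ → ∀ b ∈ Set.Icc (0 : ℝ) 1,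
      Integrable (fun x => Vs μ₀ (Gf p Q0 Q1 x b) * Wf Q0 Q1 b x) μ)
    (hBellman : ∀ μ₀ : ℝ, 0 ≤ μ₀ → ∀ b ∈ Set.Icc (0 : ℝ) 1,
      Vs μ₀ b =
        max (lam * b + μ₀ + β * ∫ x, Vs μ₀ (Gf p Q0 Q1 x b) * Wf Q0 Q1 b x ∂μ)
            (lam - c + β * Vs μ₀ (1 - p))) :
    ∀ μ₀ ζ : ℝ, 0 ≤ μ₀ → μ₀ ≤ ζ →
      {b ∈ Set.Icc (0 : ℝ) 1 |
          lam * b + μ₀ + β * ∫ x, Vs μ₀ (Gf p Q0 Q1 x b) * Wf Q0 Q1 b x ∂μ ≥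
            lam - c + β * Vs μ₀ (1 - p)} ⊆
        {b ∈ Set.Icc (0 : ℝ) 1 |
          lam * b + ζ + β * ∫ x, Vs ζ (Gf p Q0 Q1 x b) * Wf Q0 Q1 b x ∂μ ≥
            lam - c + β * Vs ζ (1 - p)} := by
  intro μ₀ ζ hμ0 hμζ b hb
  obtain ⟨hbI, hbP⟩ := hb
  have hζ0 : (0:ℝ) ≤ ζ := hμ0.trans hμζ
  have hβ0 : (0:ℝ) ≤ β := hβ.1.le
  have hβ1 : β < 1 := hβ.2
  have hδ : (0:ℝ) ≤ ζ - μ₀ := by linarith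
  have hp0 := hp.1
  have hp1 := hp.2
  have h1p : (1:ℝ) - p ∈ Set.Icc (0:ℝ) 1 := ⟨by linarith, by linarith⟩
  -- integrability of the densities
  have hQ0i : Integrable Q0 μ := by
    by_contra h
    rw [integral_undef h] at hQ0int
    norm_num at hQ0int
  have hQ1i : Integrable Q1 μ := by
    by_contra h
    rw [integral_undef h] at hQ1int
    norm_num at hQ1int
  -- W is integrable with total mass 1
  have hWi : ∀ y : ℝ, Integrable (Wf Q0 Q1 y) μ := by
    intro y
    have : Wf Q0 Q1 y = fun x => Q1 x * y + Q0 x * (1 - y) := rfl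
    rw [this]
    exact (hQ1i.mul_const y).add (hQ0i.mul_const (1 - y))
  have hWone : ∀ y : ℝ, ∫ x, Wf Q0 Q1 y x ∂μ = 1 := by
    intro y
    have h1 : ∫ x, Wf Q0 Q1 y x ∂μ = ∫ x, (Q1 x * y + Q0 x * (1 - y)) ∂μ := rfl
    rw [h1, integral_add (hQ1i.mul_const y) (hQ0i.mul_const (1 - y)),
      integral_mul_const, integral_mul_const, hQ0int, hQ1int]
    ring
  have hWnn : ∀ y ∈ Set.Icc (0:ℝ) 1, ∀ x, 0 ≤ Wf Q0 Q1 y x := by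
    intro y hy x
    exact add_nonneg (mul_nonneg (hQ1nn x) hy.1) (mul_nonneg (hQ0nn x) (by linarith [hy.2]))
  -- the updated belief lies in [0, 1-p]
  have hGK : ∀ (x : X), ∀ y ∈ Set.Icc (0:ℝ) 1, Gf p Q0 Q1 x y ∈ Set.Icc (0:ℝ) (1 - p) := by
    intro x y hy
    have hw := hWnn y hy x
    rcases eq_or_lt_of_le hw with h | h
    · have h0 : Gf p Q0 Q1 x y = 0 := by
        rw [Gf, ← h, div_zero]
      rw [h0]
      exact ⟨le_rfl, by linarith⟩
    · constructor
      · exact div_nonneg (mul_nonneg (mul_nonneg (by linarith) (hQ1nn x)) hy.1) hw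
      · rw [Gf, div_le_iff₀ h]
        have h2 : Q1 x * y ≤ Wf Q0 Q1 y x :=
          le_add_of_nonneg_right (mul_nonneg (hQ0nn x) (by linarith [hy.2]))
        calc (1 - p) * Q1 x * y = (1 - p) * (Q1 x * y) := by ring
          _ ≤ (1 - p) * Wf Q0 Q1 y x := mul_le_mul_of_nonneg_left h2 (by linarith)
  have hK1 : Set.Icc (0:ℝ) (1 - p) ⊆ Set.Icc (0:ℝ) 1 := Set.Icc_subset_Icc le_rfl (by linarith)
  obtain ⟨Cμ, hCμ⟩ := hVbdd μ₀ hμ0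
  obtain ⟨Cζ, hCζ⟩ := hVbdd ζ hζ0
  set u : ℝ → ℝ := fun y => Vs ζ y - Vs μ₀ y with hu
  have hubd : ∀ y ∈ Set.Icc (0:ℝ) 1, |u y| ≤ Cζ + Cμ := by
    intro y hy
    have h1 := abs_le.mp (hCζ y hy)
    have h2 := abs_le.mp (hCμ y hy)
    rw [abs_le]
    constructor <;> simp only [hu] <;> linarith
  -- the sup of u on [0,1]
  set M := sSup (u '' Set.Icc (0:ℝ) 1) with hM
  have hMne : (u '' Set.Icc (0:ℝ) 1).Nonempty := ⟨u 0, ⟨0, ⟨le_rfl, zero_le_one⟩, rfl⟩⟩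
  have hMbdd : BddAbove (u '' Set.Icc (0:ℝ) 1) := by
    refine ⟨Cζ + Cμ, ?_⟩
    rintro _ ⟨y, hy, rfl⟩
    exact (abs_le.mp (hubd y hy)).2
  have huleM : ∀ y ∈ Set.Icc (0:ℝ) 1, u y ≤ M := fun y hy => le_csSup hMbdd ⟨y, hy, rfl⟩
  -- the sup of u(1-p) - u on [0, 1-p]
  set E := sSup ((fun y => u (1 - p) - u y) '' Set.Icc (0:ℝ) (1 - p)) with hE
  have hEne : ((fun y => u (1 - p) - u y) '' Set.Icc (0:ℝ) (1 - p)).Nonempty :=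
    ⟨_, ⟨0, ⟨le_rfl, by linarith⟩, rfl⟩⟩
  have hEbdd : BddAbove ((fun y => u (1 - p) - u y) '' Set.Icc (0:ℝ) (1 - p)) := by
    refine ⟨|u (1 - p)| + (Cζ + Cμ), ?_⟩
    rintro _ ⟨y, hy, rfl⟩
    have h1 := (abs_le.mp (hubd y (hK1 hy))).1
    have h2 := le_abs_self (u (1 - p))
    simp only
    linarith
  have huleE : ∀ z ∈ Set.Icc (0:ℝ) (1 - p), u (1 - p) - u z ≤ E := fun z hz =>
    le_csSup hEbdd ⟨z, hz, rfl⟩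
  -- integral of u ∘ Gf against W
  have hIint : ∀ y ∈ Set.Icc (0:ℝ) 1,
      Integrable (fun x => u (Gf p Q0 Q1 x y) * Wf Q0 Q1 y x) μ := by
    intro y hy
    have h := (hVint ζ hζ0 y hy).sub (hVint μ₀ hμ0 y hy)
    simp only [hu, sub_mul]
    exact h
  have hIdiff : ∀ y ∈ Set.Icc (0:ℝ) 1,
      ∫ x, u (Gf p Q0 Q1 x y) * Wf Q0 Q1 y x ∂μ
        = (∫ x, Vs ζ (Gf p Q0 Q1 x y) * Wf Q0 Q1 y x ∂μ)
          - ∫ x, Vs μ₀ (Gf p Q0 Q1 x y) * Wf Q0 Q1 y x ∂μ := by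
    intro y hy
    rw [← integral_sub (hVint ζ hζ0 y hy) (hVint μ₀ hμ0 y hy)]
    congr 1
    funext x
    simp only [hu]
    ring
  have hΦleM : ∀ y ∈ Set.Icc (0:ℝ) 1,
      ∫ x, u (Gf p Q0 Q1 x y) * Wf Q0 Q1 y x ∂μ ≤ M := by
    intro y hy
    have hmono : ∫ x, u (Gf p Q0 Q1 x y) * Wf Q0 Q1 y x ∂μ ≤ ∫ x, M * Wf Q0 Q1 y x ∂μ := by
      refine integral_mono (hIint y hy) ((hWi y).const_mul M) ?_
      intro x
      exact mul_le_mul_of_nonneg_right (huleM _ (hK1 (hGK x y hy))) (hWnn y hy x)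
    rwa [integral_const_mul, hWone, mul_one] at hmono
  have hΦge : ∀ y ∈ Set.Icc (0:ℝ) 1,
      u (1 - p) - E ≤ ∫ x, u (Gf p Q0 Q1 x y) * Wf Q0 Q1 y x ∂μ := by
    intro y hy
    have hmono : ∫ x, (u (1 - p) - E) * Wf Q0 Q1 y x ∂μ
        ≤ ∫ x, u (Gf p Q0 Q1 x y) * Wf Q0 Q1 y x ∂μ := by
      refine integral_mono ((hWi y).const_mul _) (hIint y hy) ?_
      intro x
      have h1 := huleE _ (hGK x y hy)
      exact mul_le_mul_of_nonneg_right (by linarith) (hWnn y hy x)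
    rwa [integral_const_mul, hWone, mul_one] at hmono
  have hsM : u (1 - p) ≤ M := huleM _ h1p
  -- M ≤ δ + βM
  have hMle : M ≤ (ζ - μ₀) + β * M := by
    rw [hM]
    refine csSup_le hMne ?_
    rintro _ ⟨y, hy, rfl⟩
    have hBζ := hBellman ζ hζ0 y hy
    have hBμ := hBellman μ₀ hμ0 y hy
    have hφ := hΦleM y hy
    have hφ' := hIdiff y hy
    have hmul : β * ∫ x, u (Gf p Q0 Q1 x y) * Wf Q0 Q1 y x ∂μ ≤ β * M :=
      mul_le_mul_of_nonneg_left hφ hβ0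
    have h4 : β * ∫ x, u (Gf p Q0 Q1 x y) * Wf Q0 Q1 y x ∂μ
        = β * (∫ x, Vs ζ (Gf p Q0 Q1 x y) * Wf Q0 Q1 y x ∂μ)
          - β * ∫ x, Vs μ₀ (Gf p Q0 Q1 x y) * Wf Q0 Q1 y x ∂μ := by
      rw [hφ', mul_sub]
    have hsM' : Vs ζ (1 - p) - Vs μ₀ (1 - p) ≤ M := by simpa [hu] using hsM
    have hmul2 : β * (Vs ζ (1 - p) - Vs μ₀ (1 - p)) ≤ β * M :=
      mul_le_mul_of_nonneg_left hsM' hβ0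
    rw [mul_sub] at hmul2
    have hM' : β * M ≤ β * sSup (u '' Set.Icc (0:ℝ) 1) := le_of_eq (by rw [hM])
    simp only [hu]
    rw [hBζ, hBμ, sub_le_iff_le_add]
    apply max_le
    · have h3 := le_max_left (lam * y + μ₀ + β * ∫ x, Vs μ₀ (Gf p Q0 Q1 x y) * Wf Q0 Q1 y x ∂μ)
        (lam - c + β * Vs μ₀ (1 - p))
      linarith [hM', hmul, h4, h3]
    · have h3 := le_max_right (lam * y + μ₀ + β * ∫ x, Vs μ₀ (Gf p Q0 Q1 x y) * Wf Q0 Q1 y x ∂μ)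
        (lam - c + β * Vs μ₀ (1 - p))
      linarith [hM', hmul2, h3, hδ]
  have hMδ : (1 - β) * M ≤ ζ - μ₀ := by
    have he : (1 - β) * M = M - β * M := by ring
    linarith [hMle, he]
  -- (1-β) s ≤ δ, in expanded form
  have hsδ : Vs ζ (1 - p) - Vs μ₀ (1 - p) - β * Vs ζ (1 - p) + β * Vs μ₀ (1 - p) ≤ ζ - μ₀ := by
    have h1β : (0:ℝ) ≤ 1 - β := by linarith
    have hsM' : Vs ζ (1 - p) - Vs μ₀ (1 - p) ≤ M := by simpa [hu] using hsM
    have e1 := mul_le_mul_of_nonneg_left hsM' h1β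
    have e2 : (1 - β) * (Vs ζ (1 - p) - Vs μ₀ (1 - p))
        = Vs ζ (1 - p) - Vs μ₀ (1 - p) - β * Vs ζ (1 - p) + β * Vs μ₀ (1 - p) := by ring
    linarith [e1, e2, hMδ]
  -- E ≤ max δ (β E)
  have hEmax : E ≤ max (ζ - μ₀) (β * E) := by
    rw [hE]
    refine csSup_le hEne ?_
    rintro _ ⟨y, hyK, rfl⟩
    have hy : y ∈ Set.Icc (0:ℝ) 1 := hK1 hyK
    have hBζ := hBellman ζ hζ0 y hy
    have hBμ := hBellman μ₀ hμ0 y hy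
    have hE' : β * sSup ((fun y => u (1 - p) - u y) '' Set.Icc (0:ℝ) (1 - p)) = β * E :=
      le_antisymm (le_of_eq (by rw [hE])) (le_of_eq (by rw [hE]))
    rcases le_total
        (lam * y + μ₀ + β * ∫ x, Vs μ₀ (Gf p Q0 Q1 x y) * Wf Q0 Q1 y x ∂μ)
        (lam - c + β * Vs μ₀ (1 - p)) with hca | hcp
    · -- repair optimal under μ₀ at y
      have hVμy : Vs μ₀ y = lam - c + β * Vs μ₀ (1 - p) := by rw [hBμ, max_eq_right hca]
      have hVζy : lam - c + β * Vs ζ (1 - p) ≤ Vs ζ y := by rw [hBζ]; exact le_max_right _ _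
      refine le_trans ?_ (le_max_left _ _)
      simp only [hu]
      linarith [hVμy, hVζy, hsδ]
    · -- do-nothing optimal under μ₀ at y
      have hVμy : Vs μ₀ y
          = lam * y + μ₀ + β * ∫ x, Vs μ₀ (Gf p Q0 Q1 x y) * Wf Q0 Q1 y x ∂μ := by
        rw [hBμ, max_eq_left hcp]
      have hVζy : lam * y + ζ + β * ∫ x, Vs ζ (Gf p Q0 Q1 x y) * Wf Q0 Q1 y x ∂μ ≤ Vs ζ y := by
        rw [hBζ]; exact le_max_left _ _
      have hφ := hΦge y hy
      have hφ' := hIdiff y hy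
      have e3 : β * (u (1 - p) - E) ≤ β * ∫ x, u (Gf p Q0 Q1 x y) * Wf Q0 Q1 y x ∂μ :=
        mul_le_mul_of_nonneg_left hφ hβ0
      have e4 : β * (u (1 - p) - E)
          = β * Vs ζ (1 - p) - β * Vs μ₀ (1 - p) - β * E := by
        simp only [hu]; ring
      have e5 : β * ∫ x, u (Gf p Q0 Q1 x y) * Wf Q0 Q1 y x ∂μ
          = β * (∫ x, Vs ζ (Gf p Q0 Q1 x y) * Wf Q0 Q1 y x ∂μ)
            - β * ∫ x, Vs μ₀ (Gf p Q0 Q1 x y) * Wf Q0 Q1 y x ∂μ := by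
        rw [hφ', mul_sub]
      refine le_trans ?_ (le_max_right _ _)
      simp only [hu]
      rw [hE']
      linarith [hVμy, hVζy, e3, e4, e5, hsδ]
  have hEδ : E ≤ ζ - μ₀ := by
    rcases le_max_iff.mp hEmax with h | h
    · exact h
    · nlinarith [h, hδ, sub_pos.mpr hβ1]
  -- conclude
  refine ⟨hbI, ?_⟩
  have hφb := hΦge b hbI
  have hφb' := hIdiff b hbI
  have e0 : u (1 - p) - (ζ - μ₀) ≤ ∫ x, u (Gf p Q0 Q1 x b) * Wf Q0 Q1 b x ∂μ := by
    linarith [hφb, hEδ]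
  have e3 := mul_le_mul_of_nonneg_left e0 hβ0
  have e4 : β * (u (1 - p) - (ζ - μ₀))
      = β * Vs ζ (1 - p) - β * Vs μ₀ (1 - p) - β * (ζ - μ₀) := by
    simp only [hu]; ring
  have e5 : β * ∫ x, u (Gf p Q0 Q1 x b) * Wf Q0 Q1 b x ∂μ
      = β * (∫ x, Vs ζ (Gf p Q0 Q1 x b) * Wf Q0 Q1 b x ∂μ)
        - β * ∫ x, Vs μ₀ (Gf p Q0 Q1 x b) * Wf Q0 Q1 b x ∂μ := by
    rw [hφb', mul_sub]
  have e6 : β * (ζ - μ₀) ≤ ζ - μ₀ := mul_le_of_le_one_left hδ hβ1.le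
  linarith [hbP, e3, e4, e5, e6]
end
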